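/- arXiv:2512.01520 — 2 statements merged into one kernel-verified Lean document; each statement's English description precedes it below -/
import Mathlib

section
/- Let R be a principal ideal domain with a ring automorphism σ and let p, q ∈ R be nonzero. Then the only (p,q)-invariant ideals of R are 0 and R if and only if both of the following hold: (1) for every irreducible z ∈ R and every n ≥ 1, σ^n(z) is not an associate of z; and (2) there is no irreducible element q₀ ∈ R and integer n ≥ 0 such that q₀ divides q and σ^n(q₀) divides p. -/
/-!
If `g` generates a nontrivial invariant ideal, then `g ∣ σ(g)·q` and `g ∣ σ⁻¹(g)·p`. Iterating,
`g ∣ σⁿ(g)·q·σ(q)⋯σⁿ⁻¹(q)`, and likewise with `σ⁻¹` and `p`. If all `σ`-orbits of irreducibles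
are infinite (up to associates), a prime `z ∣ g` cannot divide every `σⁿ(g)`, since `g` has only
finitely many prime factors; so `z ∣ σʲ(q)` and `z ∣ σ⁻ʲ'(p)`, which produces the forbidden
`q₀ = σ⁻ʲ(z)`.
Conversely, a finite orbit `σⁿ(z) ~ z`, or a pair `q₀ ∣ q`, `σⁿ(q₀) ∣ p`, yields the nontrivial
invariant ideal generated by the orbit product `z·σ(z)⋯σⁿ⁻¹(z)`, resp. `q₀·σ(q₀)⋯σⁿ(q₀)`.
-/

/-- An ideal `I` of `R` is `(p,q)`-invariant if `σ⁻¹(i)·p ∈ I` and `σ(i)·q ∈ I`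
for every `i ∈ I`. -/
def PQInvariant {R : Type*} [CommRing R] (σ : R ≃+* R) (p q : R) (I : Ideal R) : Prop :=
  ∀ i ∈ I, σ⁻¹ i * p ∈ I ∧ σ i * q ∈ I

namespace RingEquiv

variable {R : Type*}

section Semiring

variable [Semiring R] (τ : R ≃+* R)

theorem pow_apply_inv_pow_apply (n : ℕ) (x : R) : (τ ^ n) ((τ⁻¹ ^ n) x) = x := by
  rw [inv_pow]; exact (τ ^ n).apply_symm_apply x

theorem inv_pow_apply_pow_apply (n : ℕ) (x : R) : (τ⁻¹ ^ n) ((τ ^ n) x) = x := by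
  rw [inv_pow]; exact (τ ^ n).symm_apply_apply x

theorem pow_succ_apply (n : ℕ) (x : R) : (τ ^ (n + 1)) x = (τ ^ n) (τ x) := by
  rw [pow_succ]; rfl

theorem pow_succ'_apply (n : ℕ) (x : R) : (τ ^ (n + 1)) x = τ ((τ ^ n) x) := by
  rw [pow_succ']; rfl

theorem not_associated_inv_pow_apply {z : R} (hz : ∀ m : ℕ, 1 ≤ m → ¬ Associated ((τ ^ m) z) z)
    (m : ℕ) (hm : 1 ≤ m) : ¬ Associated ((τ⁻¹ ^ m) z) z := fun h => by
  have := h.map (τ ^ m)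
  rw [pow_apply_inv_pow_apply] at this
  exact hz m hm this.symm

end Semiring

section UniqueFactorization

variable [CommSemiring R] [UniqueFactorizationMonoid R] (τ : R ≃+* R)

/-- Pigeonhole on the finitely many prime factors of `g`. -/
theorem exists_associated_pow_apply_of_forall_dvd {g z : R} (hg : g ≠ 0) (hz : Irreducible z)
    (hdvd : ∀ n : ℕ, (τ ^ n) z ∣ g) :
    ∃ m : ℕ, 1 ≤ m ∧ Associated ((τ ^ m) z) z := by
  classical
  choose F hF hFassoc using fun n =>
    UniqueFactorizationMonoid.exists_mem_factors_of_dvd hg (hz.map (τ ^ n)) (hdvd n)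
  obtain ⟨i, j, hij, hFij⟩ := Finite.exists_ne_map_eq_of_infinite
    fun n : ℕ => (⟨F n, Multiset.mem_toFinset.mpr (hF n)⟩ :
      (UniqueFactorizationMonoid.factors g).toFinset)
  have hassoc (a b : ℕ) (hab : F a = F b) : Associated ((τ ^ a) z) ((τ ^ b) z) :=
    (hFassoc a).trans (hab ▸ (hFassoc b).symm)
  have key (a b : ℕ) (hab : a < b) (h : Associated ((τ ^ a) z) ((τ ^ b) z)) :
      ∃ m : ℕ, 1 ≤ m ∧ Associated ((τ ^ m) z) z := by
    obtain ⟨m, rfl⟩ := Nat.exists_eq_add_of_lt hab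
    have := h.map (τ ^ a).symm
    rw [add_assoc, pow_add, RingAut.mul_apply, symm_apply_apply, symm_apply_apply] at this
    exact ⟨m + 1, by omega, this.symm⟩
  rcases hij.lt_or_gt with h | h
  · exact key i j h (hassoc i j (congrArg Subtype.val hFij))
  · exact key j i h (hassoc j i (congrArg Subtype.val hFij.symm))

theorem exists_not_dvd_pow_apply {g z : R} (hg : g ≠ 0) (hz : Irreducible z)
    (horbit : ∀ m : ℕ, 1 ≤ m → ¬ Associated ((τ ^ m) z) z) :
    ∃ n : ℕ, ¬ z ∣ (τ ^ n) g := by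
  by_contra! hall
  have hdvd (n : ℕ) : (τ⁻¹ ^ n) z ∣ g := by
    simpa only [inv_pow_apply_pow_apply] using map_dvd (τ⁻¹ ^ n) (hall n)
  obtain ⟨m, hm, h⟩ := exists_associated_pow_apply_of_forall_dvd τ⁻¹ hg hz hdvd
  exact not_associated_inv_pow_apply τ horbit m hm h

end UniqueFactorization

end RingEquiv

open RingEquiv

section OrbitProd

variable {R : Type*} [CommRing R] (τ : R ≃+* R)

def orbitProd (x : R) (n : ℕ) : R :=
  ∏ k ∈ Finset.range n, (τ ^ k) x

theorem orbitProd_succ (x : R) (n : ℕ) : orbitProd τ x (n + 1) = orbitProd τ x n * (τ ^ n) x :=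
  Finset.prod_range_succ _ _

theorem apply_orbitProd_mul (x : R) (n : ℕ) :
    τ (orbitProd τ x n) * x = orbitProd τ x n * (τ ^ n) x := by
  rw [← orbitProd_succ]
  unfold orbitProd
  simp only [Finset.prod_range_succ', map_prod, pow_succ'_apply, pow_zero, RingAut.one_apply]

theorem dvd_orbitProd (x : R) {n : ℕ} (hn : 1 ≤ n) : x ∣ orbitProd τ x n :=
  Finset.dvd_prod_of_mem (fun k => (τ ^ k) x) (Finset.mem_range.mpr hn)

theorem orbitProd_ne_zero [IsDomain R] {x : R} (hx : x ≠ 0) (n : ℕ) : orbitProd τ x n ≠ 0 :=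
  Finset.prod_ne_zero_iff.mpr fun k _ => (RingEquiv.map_ne_zero_iff (τ ^ k)).mpr hx

theorem not_isUnit_orbitProd {x : R} (hx : ¬ IsUnit x) {n : ℕ} (hn : 1 ≤ n) :
    ¬ IsUnit (orbitProd τ x n) :=
  fun h => hx (isUnit_of_dvd_unit (dvd_orbitProd τ x hn) h)

theorem associated_apply_orbitProd [IsDomain R] {x : R} (hx : x ≠ 0) {n : ℕ}
    (h : Associated ((τ ^ n) x) x) : Associated (τ (orbitProd τ x n)) (orbitProd τ x n) :=
  Associated.of_mul_right (.of_eq (apply_orbitProd_mul τ x n)) h.symm hx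

theorem orbitProd_dvd_apply_mul {x q : R} (hxq : x ∣ q) (n : ℕ) :
    orbitProd τ x n ∣ τ (orbitProd τ x n) * q :=
  (Dvd.intro _ (apply_orbitProd_mul τ x n).symm).trans (mul_dvd_mul_left _ hxq)

theorem orbitProd_succ_dvd_inv_apply_mul {x p : R} {n : ℕ} (hxp : (τ ^ n) x ∣ p) :
    orbitProd τ x (n + 1) ∣ τ⁻¹ (orbitProd τ x (n + 1)) * p := by
  have h := congrArg τ.symm (apply_orbitProd_mul τ x (n + 1))
  simp only [map_mul, symm_apply_apply, pow_succ'_apply] at h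
  rw [RingAut.inv_apply]
  exact (Dvd.intro _ h).trans (mul_dvd_mul_left _ hxp)

theorem dvd_pow_apply_mul_orbitProd {g q : R} (h : g ∣ τ g * q) (n : ℕ) :
    g ∣ (τ ^ n) g * orbitProd τ q n := by
  induction n with
  | zero => simp [orbitProd]
  | succ n ih =>
    have step : (τ ^ n) g ∣ (τ ^ (n + 1)) g * (τ ^ n) q := by
      simpa only [map_mul, ← pow_succ_apply] using map_dvd (τ ^ n) h
    calc g ∣ (τ ^ n) g * orbitProd τ q n := ih
      _ ∣ (τ ^ (n + 1)) g * (τ ^ n) q * orbitProd τ q n := mul_dvd_mul_right step _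
      _ = (τ ^ (n + 1)) g * orbitProd τ q (n + 1) := by rw [orbitProd_succ]; ring

theorem exists_dvd_pow_apply_of_dvd_apply_mul [UniqueFactorizationMonoid R] {g z q : R}
    (hg : g ≠ 0) (hz : Irreducible z) (hzg : z ∣ g)
    (horbit : ∀ m : ℕ, 1 ≤ m → ¬ Associated ((τ ^ m) z) z) (h : g ∣ τ g * q) :
    ∃ j : ℕ, z ∣ (τ ^ j) q := by
  have hz' : Prime z := UniqueFactorizationMonoid.irreducible_iff_prime.mp hz
  obtain ⟨n, hn⟩ := exists_not_dvd_pow_apply τ hg hz horbit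
  have hdvd := (hz'.dvd_mul.mp (hzg.trans (dvd_pow_apply_mul_orbitProd τ h n))).resolve_left hn
  obtain ⟨j, -, hj⟩ := hz'.exists_mem_finset_dvd hdvd
  exact ⟨j, hj⟩

end OrbitProd

section Invariant

variable {R : Type*} [CommRing R] (σ : R ≃+* R) (p q : R)

theorem pqInvariant_span_singleton_iff (g : R) :
    PQInvariant σ p q (Ideal.span {g}) ↔ g ∣ σ⁻¹ g * p ∧ g ∣ σ g * q := by
  simp only [PQInvariant, Ideal.mem_span_singleton]
  refine ⟨fun h => h g dvd_rfl, ?_⟩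
  rintro ⟨hp, hq⟩ _ ⟨r, rfl⟩
  rw [map_mul, map_mul, mul_right_comm, mul_right_comm (σ g)]
  exact ⟨hp.mul_right _, hq.mul_right _⟩

theorem forall_pqInvariant_eq_bot_or_eq_top_iff [IsPrincipalIdealRing R] :
    (∀ I : Ideal R, PQInvariant σ p q I → I = ⊥ ∨ I = ⊤) ↔
      ∀ g : R, g ∣ σ⁻¹ g * p → g ∣ σ g * q → g = 0 ∨ IsUnit g := by
  refine ⟨fun h g hp hq => ?_, fun h I hI => ?_⟩
  · simpa only [Ideal.span_singleton_eq_bot, Ideal.span_singleton_eq_top] using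
      h _ ((pqInvariant_span_singleton_iff σ p q g).mpr ⟨hp, hq⟩)
  · obtain ⟨g, rfl⟩ := (IsPrincipalIdealRing.principal I).1
    simpa only [Ideal.submodule_span_eq, Ideal.span_singleton_eq_bot,
      Ideal.span_singleton_eq_top] using
      h g ((pqInvariant_span_singleton_iff σ p q g).mp hI).1
        ((pqInvariant_span_singleton_iff σ p q g).mp hI).2

end Invariant

theorem stmt_3_general {R : Type*} [CommRing R] [IsDomain R] [IsPrincipalIdealRing R]
    (σ : R ≃+* R) (p q : R) :
    (∀ I : Ideal R, PQInvariant σ p q I → I = ⊥ ∨ I = ⊤) ↔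
      ((∀ z : R, Irreducible z → ∀ n : ℕ, 1 ≤ n → ¬ Associated ((σ ^ n) z) z) ∧
        ¬ ∃ (q₀ : R) (n : ℕ), Irreducible q₀ ∧ q₀ ∣ q ∧ (σ ^ n) q₀ ∣ p) := by
  rw [forall_pqInvariant_eq_bot_or_eq_top_iff]
  constructor
  · intro h
    refine ⟨fun z hz n hn hzn => ?_, fun ⟨q₀, n, hq₀, hq₀q, hq₀p⟩ => ?_⟩
    · have hσ := associated_apply_orbitProd σ hz.ne_zero hzn
      have hσ' : Associated (orbitProd σ z n) (σ⁻¹ (orbitProd σ z n)) := by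
        simpa only [RingAut.inv_apply, symm_apply_apply] using hσ.map σ.symm
      rcases h _ (hσ'.dvd.mul_right p) (hσ.symm.dvd.mul_right q) with h0 | hu
      · exact orbitProd_ne_zero σ hz.ne_zero n h0
      · exact not_isUnit_orbitProd σ hz.not_isUnit hn hu
    · rcases h _ (orbitProd_succ_dvd_inv_apply_mul σ hq₀p) (orbitProd_dvd_apply_mul σ hq₀q _)
        with h0 | hu
      · exact orbitProd_ne_zero σ hq₀.ne_zero _ h0
      · exact not_isUnit_orbitProd σ hq₀.not_isUnit (Nat.le_add_left 1 n) hu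
  · rintro ⟨horbit, hpair⟩ g hgp hgq
    by_contra! ⟨hg0, hgu⟩
    obtain ⟨z, hz, hzg⟩ := WfDvdMonoid.exists_irreducible_factor hgu hg0
    obtain ⟨j, hj⟩ := exists_dvd_pow_apply_of_dvd_apply_mul σ hg0 hz hzg (horbit z hz) hgq
    obtain ⟨k, hk⟩ := exists_dvd_pow_apply_of_dvd_apply_mul σ⁻¹ hg0 hz hzg
      (not_associated_inv_pow_apply σ (horbit z hz)) hgp
    refine hpair ⟨(σ⁻¹ ^ j) z, k + j, hz.map _, ?_, ?_⟩
    · simpa only [inv_pow_apply_pow_apply] using map_dvd (σ⁻¹ ^ j) hj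
    · rw [pow_add, RingAut.mul_apply, pow_apply_inv_pow_apply]
      simpa only [pow_apply_inv_pow_apply] using map_dvd (σ ^ k) hk

/-- Simplicity criterion for the rank-one `R`-free module `V_p` over a
PID: the only `(p,q)`-invariant ideals are `0` and `R` iff all `σ`-orbits of irreducibles
are infinite and no irreducible `q₀ ∣ q` has `σ^n(q₀) ∣ p` for some `n ≥ 0`. -/
theorem stmt_3 {R : Type*} [CommRing R] [IsDomain R] [IsPrincipalIdealRing R]
    (σ : R ≃+* R) (p q : R) (hp : p ≠ 0) (hq : q ≠ 0) :
    (∀ I : Ideal R, PQInvariant σ p q I → I = ⊥ ∨ I = ⊤) ↔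
      ((∀ z : R, Irreducible z → ∀ n : ℕ, 1 ≤ n → ¬ Associated ((σ ^ n) z) z) ∧
        ¬ ∃ (q₀ : R) (n : ℕ), Irreducible q₀ ∧ q₀ ∣ q ∧ (σ ^ n) q₀ ∣ p) :=
  stmt_3_general σ p q
end

section
/- Let R be a commutative noetherian integral domain with a ring automorphism σ, and let p, q ∈ R be nonzero with at least one of p or q a unit of R. Then an ideal I of R is (p,q)-invariant if and only if σ(I) = I. -/
namespace OrderIso

variable {α : Type*} [PartialOrder α] [WellFoundedGT α] (f : α ≃o α) {x : α}

theorem apply_eq_of_le_apply (h : x ≤ f x) : f x = x := by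
  have hmono : Monotone fun n => f^[n] x :=
    monotone_nat_of_le_succ fun n => by
      simpa only [Function.iterate_succ_apply] using f.monotone.iterate n h
  obtain ⟨n, hn⟩ := WellFoundedGT.monotone_chain_condition ⟨_, hmono⟩
  have hstep : f^[n] x = f^[n] (f x) := hn (n + 1) n.le_succ
  exact (f.injective.iterate n hstep).symm

theorem apply_eq_of_apply_le (h : f x ≤ x) : f x = x := by
  have : f.symm x = x := f.symm.apply_eq_of_le_apply (f.le_symm_apply.mpr h)
  rw [← this, apply_symm_apply, this]

end OrderIso

section PQInvariant

variable {R : Type*} [CommRing R] {σ : R ≃+* R} {p q : R} {I : Ideal R}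

theorem PQInvariant.map_le_of_isUnit_right (h : PQInvariant σ p q I) (hq : IsUnit q) :
    I.map σ ≤ I :=
  Ideal.map_le_iff_le_comap.mpr fun i hi => (Ideal.mul_unit_mem_iff_mem I hq).mp (h i hi).2

theorem PQInvariant.le_map_of_isUnit_left (h : PQInvariant σ p q I) (hp : IsUnit p) :
    I ≤ I.map σ := by
  rw [← Ideal.comap_symm]
  exact fun i hi => (Ideal.mul_unit_mem_iff_mem I hp).mp (h i hi).1

theorem pqInvariant_of_map_eq (h : I.map σ = I) (p q : R) : PQInvariant σ p q I := by
  have hσ : ∀ i ∈ I, σ i ∈ I := fun i hi => h ▸ Ideal.mem_map_of_mem σ hi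
  have hσinv : ∀ i ∈ I, σ.symm i ∈ I := fun i hi => by
    rwa [← h, ← Ideal.comap_symm] at hi
  exact fun i hi => ⟨I.mul_mem_right p (hσinv i hi), I.mul_mem_right q (hσ i hi)⟩

end PQInvariant

namespace Ideal

variable {R : Type*} [Semiring R] [IsNoetherianRing R] (e : R ≃+* R) {I : Ideal R}

theorem map_ringEquiv_eq_of_le_map (h : I ≤ I.map e) : I.map e = I :=
  e.idealComapOrderIso.symm.apply_eq_of_le_apply h

theorem map_ringEquiv_eq_of_map_le (h : I.map e ≤ I) : I.map e = I :=
  e.idealComapOrderIso.symm.apply_eq_of_apply_le h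

end Ideal

theorem stmt_14_general {R : Type*} [CommRing R] [IsNoetherianRing R]
    (σ : R ≃+* R) (p q : R) (hu : IsUnit p ∨ IsUnit q)
    (I : Ideal R) :
    PQInvariant σ p q I ↔ Ideal.map (σ : R →+* R) I = I := by
  refine ⟨fun h => ?_, fun h => pqInvariant_of_map_eq h p q⟩
  rcases hu with hp | hq
  · exact Ideal.map_ringEquiv_eq_of_le_map σ (h.le_map_of_isUnit_left hp)
  · exact Ideal.map_ringEquiv_eq_of_map_le σ (h.map_le_of_isUnit_right hq)

/-- Over a noetherian domain, if `p` or `q` is a unit, then the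
`(p,q)`-invariant ideals (= submodules of the universal Whittaker module `V_p`) are
exactly the `σ`-stable ideals of `R`. -/
theorem stmt_14 {R : Type*} [CommRing R] [IsDomain R] [IsNoetherianRing R]
    (σ : R ≃+* R) (p q : R) (hp : p ≠ 0) (hq : q ≠ 0) (hu : IsUnit p ∨ IsUnit q)
    (I : Ideal R) :
    PQInvariant σ p q I ↔ Ideal.map (σ : R →+* R) I = I :=
  stmt_14_general σ p q hu I
end
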